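/- arXiv:1705.01291 — 4 statements merged into one kernel-verified Lean document; each statement's English description precedes it below -/
import Mathlib

section
/- Let $H$ be a real $2N \times 2N$ Hamiltonian matrix (i.e. $JH$ is symmetric) that is hyperbolic (no purely imaginary eigenvalues). Then its stable subspace $E^s = \{v \in \mathbb{R}^{2N} : e^{\tau H}v \to 0 \text{ as } \tau \to +\infty\}$ is a Lagrangian subspace of $(\mathbb{R}^{2N}, \omega)$: it is $N$-dimensional and $\omega(u,v) = 0$ for all $u,v \in E^s$. -/
/-!
The flow `exp (τ • H)` of a Hamiltonian matrix preserves `ω`, so `ω(u, v)` is constant along the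
flow; for `u, v ∈ Eˢ` it tends to `ω(0, 0) = 0`, hence `Eˢ` is isotropic, and so is the unstable
subspace `Eᵘ`, the stable subspace of `-H`. Over `ℂ`, hyperbolicity splits the space into
generalized eigenspaces for eigenvalues of negative or positive real part, on which the flow of
`H`, resp. `-H`, decays; taking real parts gives `Eˢ + Eᵘ = ℝ²ᴺ`. An isotropic subspace of a
nondegenerate form on `ℝ²ᴺ` has dimension at most `N`, so `dim Eˢ = N`.
-/

open Matrix Filter Topology NormedSpace

lemma tendsto_pow_mul_cexp_atTop {μ : ℂ} (hμ : μ.re < 0) (j : ℕ) :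
    Tendsto (fun τ : ℝ => (τ : ℂ) ^ j * Complex.exp (τ * μ)) atTop (𝓝 0) := by
  rw [tendsto_zero_iff_norm_tendsto_zero]
  refine (tendsto_rpow_mul_exp_neg_mul_atTop_nhds_zero j (-μ.re) (by linarith)).congr' ?_
  filter_upwards [eventually_ge_atTop 0] with τ hτ
  simp [Complex.norm_exp, abs_of_nonneg hτ, mul_comm]

namespace Matrix

variable {m : Type*} [Fintype m]

def IsIsotropic {K : Type*} [CommRing K] (J : Matrix m m K) (W : Submodule K (m → K)) : Prop :=
  ∀ u ∈ W, ∀ v ∈ W, J *ᵥ u ⬝ᵥ v = 0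

lemma dotProduct_mulVec_eq_zero_of_tendsto {R : Type*} [CommRing R] [TopologicalSpace R]
    [IsTopologicalRing R] [T2Space R] {J : Matrix m m R} {Φ : ℝ → Matrix m m R}
    (hΦ : ∀ τ, (Φ τ)ᵀ * J * Φ τ = J) {u v : m → R}
    (hu : Tendsto (fun τ => Φ τ *ᵥ u) atTop (𝓝 0)) (hv : Tendsto (fun τ => Φ τ *ᵥ v) atTop (𝓝 0)) :
    J *ᵥ u ⬝ᵥ v = 0 := by
  have hω : ∀ τ, J *ᵥ (Φ τ *ᵥ u) ⬝ᵥ Φ τ *ᵥ v = J *ᵥ u ⬝ᵥ v := fun τ => by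
    rw [mulVec_mulVec, dotProduct_mulVec, ← mulVec_transpose, mulVec_mulVec, ← mul_assoc, hΦ]
  have hcont : Continuous fun p : (m → R) × (m → R) => J *ᵥ p.1 ⬝ᵥ p.2 :=
    (continuous_const.matrix_mulVec continuous_fst).dotProduct continuous_snd
  have h := (hcont.tendsto (0, 0)).comp (hu.prodMk_nhds hv)
  simp only [Function.comp_def, hω, mulVec_zero, zero_dotProduct] at h
  exact tendsto_const_nhds_iff.mp h

lemma re_mulVec_map_ofReal (M : Matrix m m ℝ) (w : m → ℂ) :
    (fun i => ((M.map Complex.ofReal *ᵥ w) i).re) = M *ᵥ fun i => (w i).re := by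
  ext i
  simp [mulVec, dotProduct, Complex.re_sum]

variable [DecidableEq m]

lemma IsIsotropic.finrank_add_finrank_le_card {K : Type*} [Field K] {J : Matrix m m K}
    (hJ : J.det ≠ 0) {W : Submodule K (m → K)} (hW : J.IsIsotropic W) :
    Module.finrank K W + Module.finrank K W ≤ Fintype.card m := by
  have hle : W ≤ J.toBilin'.orthogonal W := fun v hv w hw => by
    change J.toBilin' w v = 0
    rw [toBilin'_apply', dotProduct_comm]
    exact hW v hv w hw
  have hW' := Submodule.finrank_mono hle
  have hWV := Submodule.finrank_le W
  rw [LinearMap.BilinForm.finrank_orthogonal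
    (LinearMap.BilinForm.nondegenerate_toBilin'_of_det_ne_zero' J hJ)] at hW'
  rw [Module.finrank_fintype_fun_eq_card] at hW' hWV
  omega

lemma IsIsotropic.finrank_add_finrank_eq_card_of_sup_eq_top {K : Type*} [Field K]
    {J : Matrix m m K} (hJ : J.det ≠ 0) {W W' : Submodule K (m → K)} (hW : J.IsIsotropic W)
    (hW' : J.IsIsotropic W') (hsup : W ⊔ W' = ⊤) :
    Module.finrank K W + Module.finrank K W = Fintype.card m := by
  have h := Submodule.finrank_sup_add_finrank_inf_eq W W'
  rw [hsup, finrank_top, Module.finrank_fintype_fun_eq_card] at h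
  have := hW.finrank_add_finrank_le_card hJ
  have := hW'.finrank_add_finrank_le_card hJ
  omega

lemma transpose_exp_mul_mul_exp {𝕂 : Type*} [RCLike 𝕂] {J H : Matrix m m 𝕂}
    (hJ : IsUnit J.det) (hJt : Jᵀ = -J) (hH : (J * H).IsSymm) :
    (exp H)ᵀ * J * exp H = J := by
  have hHt : Hᵀ = J * -H * J⁻¹ := by
    have h := hH.eq
    rw [transpose_mul, hJt, mul_neg] at h
    rw [mul_neg, ← h, neg_neg, mul_nonsing_inv_cancel_right _ _ hJ]
  have hinv : exp (-H) * exp H = 1 := by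
    rw [exp_neg, nonsing_inv_mul _ ((isUnit_iff_isUnit_det _).mp (isUnit_exp H))]
  calc (exp H)ᵀ * J * exp H = J * exp (-H) * J⁻¹ * J * exp H := by
        rw [← exp_transpose, hHt, exp_conj _ _ ((isUnit_iff_isUnit_det _).mpr hJ)]
    _ = J := by rw [nonsing_inv_mul_cancel_right _ _ hJ, mul_assoc, hinv, mul_one]

def stableSubmodule {𝕂 : Type*} [RCLike 𝕂] (A : Matrix m m 𝕂) : Submodule 𝕂 (m → 𝕂) where
  carrier := {w | Tendsto (fun τ : ℝ => exp (τ • A) *ᵥ w) atTop (𝓝 0)}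
  add_mem' hu hv := by simpa [mulVec_add] using hu.add hv
  zero_mem' := by simp
  smul_mem' c w hw := by simpa [mulVec_smul] using hw.const_smul c

lemma isIsotropic_stableSubmodule {𝕂 : Type*} [RCLike 𝕂] {J H : Matrix m m 𝕂}
    (hJ : IsUnit J.det) (hJt : Jᵀ = -J) (hH : (J * H).IsSymm) :
    J.IsIsotropic (stableSubmodule H) := fun _ hu _ hv =>
  dotProduct_mulVec_eq_zero_of_tendsto
    (fun τ => transpose_exp_mul_mul_exp hJ hJt (by rw [mul_smul_comm]; exact hH.smul τ)) hu hv

lemma exp_mulVec_eq_sum_of_pow_mulVec_eq_zero {𝕂 : Type*} [RCLike 𝕂] {N : Matrix m m 𝕂}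
    {w : m → 𝕂} {k : ℕ} (hw : N ^ k *ᵥ w = 0) :
    exp N *ᵥ w = ∑ j ∈ Finset.range k, (j.factorial : 𝕂)⁻¹ • (N ^ j *ᵥ w) := by
  -- the exponential series converges for any submultiplicative norm; we pick the operator norm
  open scoped Norms.Operator in
  have hs : HasSum (fun j => ((j.factorial : 𝕂)⁻¹ • N ^ j) *ᵥ w) (exp N *ᵥ w) :=
    (exp_series_hasSum_exp' N).map (mulVec.addMonoidHomLeft w)
      (continuous_id.matrix_mulVec continuous_const)
  simp only [smul_mulVec] at hs
  refine hs.unique (hasSum_sum_of_ne_finset_zero fun j hj => ?_)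
  rw [← pow_sub_mul_pow N (not_lt.mp (Finset.mem_range.not.mp hj)), ← mulVec_mulVec, hw,
    mulVec_zero, smul_zero]

lemma exp_map_ofReal (M : Matrix m m ℝ) :
    exp (M.map Complex.ofReal) = (exp M).map Complex.ofReal := by
  open scoped Norms.Operator in
  exact (map_exp Complex.ofRealHom.mapMatrix
    (continuous_id.matrix_map Complex.continuous_ofReal) M).symm

lemma exp_smul_one (c : ℂ) : exp (c • (1 : Matrix m m ℂ)) = Complex.exp c • 1 := by
  rw [smul_one_eq_diagonal, exp_diagonal]
  simp [Complex.exp_eq_exp_ℂ, smul_one_eq_diagonal]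

lemma exp_smul_eq_cexp_smul_exp (A : Matrix m m ℂ) (μ : ℂ) (τ : ℝ) :
    exp (τ • A) = Complex.exp (τ * μ) • exp (τ • (A - μ • 1)) := by
  have hsplit : τ • A = ((τ : ℂ) * μ) • (1 : Matrix m m ℂ) + τ • (A - μ • 1) := by
    rw [smul_sub, ← Complex.coe_smul τ (μ • _), smul_smul]; abel
  rw [hsplit, exp_add_of_commute _ _ ((Commute.one_left _).smul_left _), exp_smul_one,
    smul_one_mul]

lemma mem_stableSubmodule_of_pow_sub_smul_mulVec_eq_zero {A : Matrix m m ℂ} {μ : ℂ}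
    (hμ : μ.re < 0) {w : m → ℂ} {k : ℕ} (hw : (A - μ • 1) ^ k *ᵥ w = 0) :
    w ∈ stableSubmodule A := by
  have hexp (τ : ℝ) : exp (τ • A) *ᵥ w = ∑ j ∈ Finset.range k,
      ((τ : ℂ) ^ j * Complex.exp (τ * μ) / j.factorial) • ((A - μ • 1) ^ j *ᵥ w) := by
    have hτw : (τ • (A - μ • 1)) ^ k *ᵥ w = 0 := by rw [smul_pow, smul_mulVec, hw, smul_zero]
    rw [exp_smul_eq_cexp_smul_exp A μ, smul_mulVec,
      exp_mulVec_eq_sum_of_pow_mulVec_eq_zero hτw, Finset.smul_sum]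
    refine Finset.sum_congr rfl fun j _ => ?_
    rw [smul_pow, smul_mulVec, ← Complex.coe_smul (τ ^ j), smul_smul, smul_smul]
    congr 1
    push_cast
    ring
  have h := tendsto_finsetSum (Finset.range k) fun j _ =>
    ((tendsto_pow_mul_cexp_atTop hμ j).div_const (j.factorial : ℂ)).smul_const
      ((A - μ • 1) ^ j *ᵥ w)
  simp only [zero_div, zero_smul, Finset.sum_const_zero] at h
  exact h.congr fun τ => (hexp τ).symm

lemma mem_maxGenEigenspace_toLinAlgEquiv' {K : Type*} [Field K] {A : Matrix m m K} {μ : K}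
    {w : m → K} :
    w ∈ Module.End.maxGenEigenspace (toLinAlgEquiv' A) μ ↔ ∃ k : ℕ, (A - μ • 1) ^ k *ᵥ w = 0 := by
  simp only [Module.End.mem_maxGenEigenspace, ← map_one (toLinAlgEquiv' (R := K) (n := m)),
    ← map_smul, ← map_sub, ← map_pow, toLinAlgEquiv'_apply]

lemma stableSubmodule_sup_stableSubmodule_neg_eq_top {A : Matrix m m ℂ}
    (hA : ∀ z ∈ spectrum ℂ A, z.re ≠ 0) : stableSubmodule A ⊔ stableSubmodule (-A) = ⊤ := by
  rw [eq_top_iff, ← Module.End.iSup_maxGenEigenspace_eq_top (toLinAlgEquiv' A)]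
  refine iSup_le fun μ => ?_
  rcases eq_or_ne (Module.End.maxGenEigenspace (toLinAlgEquiv' A) μ) ⊥ with h | h
  · exact h ▸ bot_le
  have hμ : μ ∈ spectrum ℂ A := by
    rw [← AlgEquiv.spectrum_eq toLinAlgEquiv' A]
    exact ((Module.End.hasUnifEigenvalue_iff_hasUnifEigenvalue_one (by simp)).1 h).mem_spectrum
  intro w hw
  obtain ⟨k, hk⟩ := mem_maxGenEigenspace_toLinAlgEquiv'.1 hw
  rcases (hA μ hμ).lt_or_gt with hneg | hpos
  · exact Submodule.mem_sup_left (mem_stableSubmodule_of_pow_sub_smul_mulVec_eq_zero hneg hk)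
  · refine Submodule.mem_sup_right
      (mem_stableSubmodule_of_pow_sub_smul_mulVec_eq_zero (μ := -μ) (k := k) (by simpa) ?_)
    rw [neg_smul, sub_neg_eq_add, neg_add_eq_sub, ← neg_sub, neg_pow, ← mulVec_mulVec, hk,
      mulVec_zero]

lemma re_mem_stableSubmodule {M : Matrix m m ℝ} {s : m → ℂ}
    (hs : s ∈ stableSubmodule (M.map Complex.ofReal)) :
    (fun i => (s i).re) ∈ stableSubmodule M := by
  have hre : Continuous fun w : m → ℂ => fun i => (w i).re := by fun_prop
  have h := (hre.tendsto 0).comp hs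
  simp only [Function.comp_def, Pi.zero_apply, Complex.zero_re] at h
  refine h.congr fun τ => ?_
  rw [← Matrix.map_smul _ τ (fun a => by simp [Complex.real_smul]), exp_map_ofReal,
    re_mulVec_map_ofReal]

lemma stableSubmodule_sup_stableSubmodule_neg_eq_top_of_map_ofReal {M : Matrix m m ℝ}
    (hM : ∀ z ∈ spectrum ℂ (M.map Complex.ofReal), z.re ≠ 0) :
    stableSubmodule M ⊔ stableSubmodule (-M) = ⊤ := by
  refine eq_top_iff.2 fun v _ => ?_
  have hv : (fun i => (v i : ℂ)) ∈ stableSubmodule (M.map Complex.ofReal) ⊔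
      stableSubmodule (-M.map Complex.ofReal) := by
    rw [stableSubmodule_sup_stableSubmodule_neg_eq_top hM]; trivial
  obtain ⟨s, hs, u, hu, hsu⟩ := Submodule.mem_sup.1 hv
  refine Submodule.mem_sup.2 ⟨_, re_mem_stableSubmodule hs, _,
    re_mem_stableSubmodule (by rwa [Matrix.map_neg _ Complex.ofReal_neg]), ?_⟩
  ext i
  simpa using congrArg (fun w => (w i).re) hsu

end Matrix

theorem stmt6 (N : ℕ) (H : Matrix (Fin N ⊕ Fin N) (Fin N ⊕ Fin N) ℝ)
    (J : Matrix (Fin N ⊕ Fin N) (Fin N ⊕ Fin N) ℝ) (hJ : J = fromBlocks 0 (-1) 1 0)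
    (hHam : (J * H).IsSymm)
    (hhyp : ∀ z ∈ spectrum ℂ (H.map Complex.ofReal), z.re ≠ 0)
    (Es : Submodule ℝ ((Fin N ⊕ Fin N) → ℝ))
    (hEs : ∀ u, u ∈ Es ↔ Filter.Tendsto (fun τ : ℝ => (NormedSpace.exp (τ • H)).mulVec u)
      Filter.atTop (nhds 0)) :
    Module.finrank ℝ Es = N ∧ ∀ u ∈ Es, ∀ v ∈ Es, J.mulVec u ⬝ᵥ v = 0 := by
  have hJt : Jᵀ = -J := by
    simp [hJ, fromBlocks_transpose, fromBlocks_neg]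
  have hJinv : J * -J = 1 := by
    simp [hJ, fromBlocks_multiply, fromBlocks_neg, ← fromBlocks_one]
  have hdet : J.det ≠ 0 := det_ne_zero_of_right_inverse hJinv
  have hEs' : Es = stableSubmodule H := Submodule.ext hEs
  have hHamNeg : (J * -H).IsSymm := by simpa only [mul_neg] using hHam.neg
  have hiso := isIsotropic_stableSubmodule hdet.isUnit hJt hHam
  have hfin := hiso.finrank_add_finrank_eq_card_of_sup_eq_top hdet
    (isIsotropic_stableSubmodule hdet.isUnit hJt hHamNeg)
    (stableSubmodule_sup_stableSubmodule_neg_eq_top_of_map_ofReal hhyp)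
  rw [Fintype.card_sum, Fintype.card_fin, ← hEs'] at hfin
  exact ⟨by omega, hEs' ▸ hiso⟩
end

section
/- Let $U : \mathbb{R}^N\setminus\{0\} \to \mathbb{R}$ be smooth and homogeneous of degree $-\alpha$ ($\alpha>0$), $M$ positive definite symmetric, and define $W(y) := |y|_M^{2+\alpha} U(y) - |y|_M^2\, U(s_0)$, where $s_0$ is a central configuration with $|s_0|_M = 1$ (i.e. $\nabla U(s_0) = -\alpha U(s_0) M s_0$). Then for any point $y_0 = \rho_0 s_0$ with $\rho_0 > 0$ and for all $\xi, \eta \in \mathbb{R}^N$, $d^2 W(y_0)[\xi,\eta] = d^2\widetilde{U}(s_0)[\xi,\eta]$, where $\widetilde{U}(x) := |x|_M^\alpha U(x)$. -/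
open Matrix

noncomputable def bform (N : ℕ) (M : Matrix (Fin N) (Fin N) ℝ) :
    (Fin N → ℝ) →L[ℝ] (Fin N → ℝ) →L[ℝ] ℝ :=
  LinearMap.toContinuousLinearMap
    { toFun := fun x => LinearMap.toContinuousLinearMap
        { toFun := fun v => M.mulVec x ⬝ᵥ v
          map_add' := fun v w => by simp [dotProduct_add]
          map_smul' := fun a v => by simp [dotProduct_smul] }
      map_add' := fun x y => by
        ext v
        simp [Matrix.mulVec_add, add_dotProduct]
      map_smul' := fun a x => by
        ext v
        simp [Matrix.mulVec_smul, smul_dotProduct] }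

lemma bform_apply {N : ℕ} (M : Matrix (Fin N) (Fin N) ℝ) (x v : Fin N → ℝ) :
    bform N M x v = M.mulVec x ⬝ᵥ v := by
  simp [bform]

lemma hasFDerivAt_qform {N : ℕ} (M : Matrix (Fin N) (Fin N) ℝ) (y : Fin N → ℝ) :
    HasFDerivAt (fun y => bform N M y y) (bform N M y + (bform N M).flip y) y := by
  have h := (bform N M).hasFDerivAt_of_bilinear (hasFDerivAt_id y) (hasFDerivAt_id y)
  refine h.congr_fderiv ?_
  ext v
  simp [ContinuousLinearMap.precompR, ContinuousLinearMap.precompL]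

lemma contDiff_qform {N : ℕ} (M : Matrix (Fin N) (Fin N) ℝ) :
    ContDiff ℝ (2 : WithTop ℕ∞) (fun y => bform N M y y) :=
  ContDiff.clm_apply (bform N M).contDiff contDiff_id

set_option maxHeartbeats 1000000 in
theorem stmt9 (N : ℕ) (α : ℝ) (hα : 0 < α)
    (M : Matrix (Fin N) (Fin N) ℝ) (hM : M.PosDef)
    (U : (Fin N → ℝ) → ℝ)
    (hU : ContDiffOn ℝ (⊤ : ℕ∞) U {y | y ≠ 0})
    (hhom : ∀ c : ℝ, 0 < c → ∀ y : Fin N → ℝ, y ≠ 0 → U (c • y) = c ^ (-α) * U y)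
    (s0 : Fin N → ℝ) (hs0 : M.mulVec s0 ⬝ᵥ s0 = 1)
    (hcc : ∀ v, fderiv ℝ U s0 v = -(α * U s0) * (M.mulVec s0 ⬝ᵥ v))
    (ρ0 : ℝ) (hρ0 : 0 < ρ0)
    (W Ut : (Fin N → ℝ) → ℝ)
    (hW : ∀ y, W y = Real.sqrt (M.mulVec y ⬝ᵥ y) ^ (2 + α) * U y
        - (M.mulVec y ⬝ᵥ y) * U s0)
    (hUt : ∀ y, Ut y = Real.sqrt (M.mulVec y ⬝ᵥ y) ^ α * U y) :
    ∀ ξ η : Fin N → ℝ,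
      fderiv ℝ (fun y => fderiv ℝ W y) (ρ0 • s0) ξ η
        = fderiv ℝ (fun y => fderiv ℝ Ut y) s0 ξ η := by
  intro ξ η
  have hc0 : ρ0 ≠ 0 := ne_of_gt hρ0
  set B := bform N M with hBdef
  set q : (Fin N → ℝ) → ℝ := fun y => B y y with hqdef
  have hqval : ∀ y, q y = M.mulVec y ⬝ᵥ y := fun y => bform_apply M y y
  -- symmetry of M
  have hMt : Mᵀ = M := hM.1
  have hsym : ∀ x v : Fin N → ℝ, M.mulVec x ⬝ᵥ v = M.mulVec v ⬝ᵥ x := by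
    intro x v
    calc M.mulVec x ⬝ᵥ v = v ⬝ᵥ M.mulVec x := dotProduct_comm _ _
      _ = (v ᵥ* M) ⬝ᵥ x := dotProduct_mulVec _ _ _
      _ = (Mᵀ *ᵥ v) ⬝ᵥ x := by rw [mulVec_transpose]
      _ = M.mulVec v ⬝ᵥ x := by rw [hMt]
  -- positivity
  have hqpos : ∀ y : Fin N → ℝ, y ≠ 0 → 0 < q y := by
    intro y hy
    have h := hM.dotProduct_mulVec_pos hy
    rw [hqval y, dotProduct_comm]
    simpa using h
  have hq0 : ∀ y : Fin N → ℝ, 0 ≤ q y := by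
    intro y
    rcases eq_or_ne y 0 with rfl | hy
    · simp [hqdef]
    · exact (hqpos y hy).le
  have hs0ne : s0 ≠ 0 := by
    intro h
    rw [h] at hs0
    simp at hs0
  have hq1 : q s0 = 1 := by rw [hqval]; exact hs0
  set V : (Fin N → ℝ) → ℝ := fun y => q y ^ (α/2) * U y with hVdef
  have hsqrt : ∀ y, Real.sqrt (M.mulVec y ⬝ᵥ y) ^ α = q y ^ (α/2) := by
    intro y
    rw [← hqval, Real.sqrt_eq_rpow, ← Real.rpow_mul (hq0 y)]
    congr 1
    ring
  have hUtV : Ut = V := funext fun y => by rw [hUt y, hsqrt y]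
  have hWeq : W = fun y => q y * (V y - U s0) := by
    funext y
    rw [hW y, ← hqval]
    rcases eq_or_ne y 0 with rfl | hy
    · have h0 : q 0 = 0 := by simp [hqdef]
      rw [h0]
      have h1 : (2 : ℝ) + α ≠ 0 := by positivity
      simp [Real.zero_rpow h1]
    · have h2 : Real.sqrt (q y) ^ (2 + α) = q y * q y ^ (α/2) := by
        rw [Real.sqrt_eq_rpow, ← Real.rpow_mul (hq0 y),
          show (1/(2:ℝ)) * (2 + α) = 1 + α/2 by ring,
          Real.rpow_add (hqpos y hy), Real.rpow_one]
      rw [h2]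
      show q y * q y ^ (α/2) * U y - q y * U s0 = q y * (q y ^ (α/2) * U y - U s0)
      ring
  rw [hUtV, hWeq]
  -- smoothness
  have hqCD : ContDiff ℝ (2 : WithTop ℕ∞) q := contDiff_qform M
  have hUCD : ∀ y : Fin N → ℝ, y ≠ 0 → ContDiffAt ℝ (2 : WithTop ℕ∞) U y := fun y hy =>
    (hU.contDiffAt (isOpen_ne.mem_nhds hy)).of_le (WithTop.coe_le_coe.mpr le_top)
  have hVCD : ∀ y : Fin N → ℝ, y ≠ 0 → ContDiffAt ℝ (2 : WithTop ℕ∞) V y := by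
    intro y hy
    exact ((Real.contDiffAt_rpow_const_of_ne
      (ne_of_gt (hqpos y hy))).comp y hqCD.contDiffAt).mul (hUCD y hy)
  have hVd : ∀ y : Fin N → ℝ, y ≠ 0 → DifferentiableAt ℝ V y := fun y hy =>
    (hVCD y hy).differentiableAt two_ne_zero
  set GV : (Fin N → ℝ) → (Fin N → ℝ) →L[ℝ] ℝ := fun y => fderiv ℝ V y with hGVdef
  have hGVd : ∀ y : Fin N → ℝ, y ≠ 0 → DifferentiableAt ℝ GV y := by
    intro y hy
    have h := (hVCD y hy).fderiv_right (m := 1) (by norm_num)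
    exact h.differentiableAt one_ne_zero
  -- derivative of q
  have hqFD : ∀ y, HasFDerivAt q (B y + B.flip y) y := fun y => hasFDerivAt_qform M y
  have hLq : ∀ x v : Fin N → ℝ, (B x + B.flip x) v = M.mulVec x ⬝ᵥ v + M.mulVec v ⬝ᵥ x := by
    intro x v
    simp [hBdef, bform_apply]
  -- fderiv V s0 = 0
  have hU0 : HasFDerivAt U (fderiv ℝ U s0) s0 :=
    ((hUCD s0 hs0ne).differentiableAt two_ne_zero).hasFDerivAt
  have hφ : HasFDerivAt (fun y => q y ^ (α/2))
      ((α/2 * q s0 ^ (α/2 - 1)) • (B s0 + B.flip s0)) s0 :=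
    (Real.hasDerivAt_rpow_const (Or.inl (by rw [hq1]; norm_num))).comp_hasFDerivAt s0 (hqFD s0)
  have hVs0' : HasFDerivAt V (q s0 ^ (α/2) • fderiv ℝ U s0
      + U s0 • ((α/2 * q s0 ^ (α/2 - 1)) • (B s0 + B.flip s0))) s0 := hφ.mul hU0
  have hGVs0 : GV s0 = 0 := by
    have h := hVs0'.fderiv
    rw [hGVdef]
    show fderiv ℝ V s0 = 0
    rw [h]
    ext v
    simp only [ContinuousLinearMap.add_apply, ContinuousLinearMap.smul_apply,
      ContinuousLinearMap.zero_apply, smul_eq_mul, hq1, Real.one_rpow, hLq]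
    rw [hcc v, hsym v s0]
    ring
  -- scaling
  have hqscale : ∀ (t : ℝ) (y : Fin N → ℝ), q (t • y) = t^2 * q y := by
    intro t y
    show B (t • y) (t • y) = t^2 * B y y
    rw [_root_.map_smul]
    simp only [ContinuousLinearMap.smul_apply, _root_.map_smul, smul_eq_mul]
    ring
  have hVscale : ∀ y : Fin N → ℝ, y ≠ 0 → V (ρ0 • y) = V y := by
    intro y hy
    show q (ρ0 • y) ^ (α/2) * U (ρ0 • y) = q y ^ (α/2) * U y
    rw [hqscale, hhom ρ0 hρ0 y hy]
    have h1 : (ρ0^2 * q y) ^ (α/2) = ρ0^α * q y ^ (α/2) := by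
      rw [Real.mul_rpow (sq_nonneg ρ0) (hq0 y)]
      congr 1
      rw [← Real.rpow_natCast ρ0 2, ← Real.rpow_mul hρ0.le]
      congr 1
      push_cast
      ring
    rw [h1]
    have h2 : ρ0 ^ α * ρ0 ^ (-α) = 1 := by
      rw [← Real.rpow_add hρ0]
      simp
    calc ρ0^α * q y ^ (α/2) * (ρ0^(-α) * U y)
        = (ρ0^α * ρ0^(-α)) * (q y ^ (α/2) * U y) := by ring
      _ = q y ^ (α/2) * U y := by rw [h2, one_mul]
  set S : (Fin N → ℝ) →L[ℝ] (Fin N → ℝ) := ρ0 • ContinuousLinearMap.id ℝ (Fin N → ℝ)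
    with hSdef
  have hSapp : ∀ v : Fin N → ℝ, S v = ρ0 • v := fun v => rfl
  have hS : ∀ y : Fin N → ℝ, HasFDerivAt (fun z : Fin N → ℝ => ρ0 • z) S y := by
    intro y
    exact S.hasFDerivAt
  have hy0ne : ρ0 • s0 ≠ 0 := smul_ne_zero hc0 hs0ne
  have hGVscale : ∀ y : Fin N → ℝ, y ≠ 0 → (GV (ρ0 • y)).comp S = GV y := by
    intro y hy
    have hne : ρ0 • y ≠ 0 := smul_ne_zero hc0 hy
    have h1 : HasFDerivAt (fun z : Fin N → ℝ => V (ρ0 • z)) ((GV (ρ0 • y)).comp S) y :=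
      ((hVd _ hne).hasFDerivAt).comp y (hS y)
    have h2 : V =ᶠ[nhds y] (fun z : Fin N → ℝ => V (ρ0 • z)) := by
      filter_upwards [isOpen_ne.mem_nhds hy] with z hz
      exact (hVscale z hz).symm
    exact ((h1.congr_of_eventuallyEq h2).fderiv).symm
  have hGVy0 : GV (ρ0 • s0) = 0 := by
    have h := hGVscale s0 hs0ne
    ext v
    have h3 := DFunLike.congr_fun h (ρ0⁻¹ • v)
    rw [ContinuousLinearMap.comp_apply, hSapp, smul_smul, mul_inv_cancel₀ hc0, one_smul,
      hGVs0] at h3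
    simpa using h3
  -- second derivative scaling
  set G' := fderiv ℝ GV (ρ0 • s0) with hG'def
  set R : ((Fin N → ℝ) →L[ℝ] ℝ) →L[ℝ] ((Fin N → ℝ) →L[ℝ] ℝ) :=
    (ContinuousLinearMap.compL ℝ (Fin N → ℝ) (Fin N → ℝ) ℝ).flip S with hRdef
  have hRapp : ∀ T : (Fin N → ℝ) →L[ℝ] ℝ, R T = T.comp S := fun T => rfl
  have hGs0eq : fderiv ℝ GV s0 = R.comp (G'.comp S) := by
    have h1 : HasFDerivAt (fun z : Fin N → ℝ => GV (ρ0 • z)) (G'.comp S) s0 :=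
      ((hGVd _ hy0ne).hasFDerivAt).comp s0 (hS s0)
    have h2 : HasFDerivAt (fun z : Fin N → ℝ => R (GV (ρ0 • z))) (R.comp (G'.comp S)) s0 :=
      (R.hasFDerivAt).comp s0 h1
    have h3 : GV =ᶠ[nhds s0] (fun z : Fin N → ℝ => R (GV (ρ0 • z))) := by
      filter_upwards [isOpen_ne.mem_nhds hs0ne] with z hz
      rw [hRapp]
      exact (hGVscale z hz).symm
    rw [h3.fderiv_eq]
    exact h2.fderiv
  -- compute LHS
  have hqy0 : q (ρ0 • s0) = ρ0^2 := by rw [hqscale, hq1, mul_one]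
  have hVy0 : V (ρ0 • s0) = U s0 := by
    rw [hVscale s0 hs0ne]
    show q s0 ^ (α/2) * U s0 = U s0
    rw [hq1, Real.one_rpow, one_mul]
  have hWd : ∀ y : Fin N → ℝ, y ≠ 0 → HasFDerivAt (fun z => q z * (V z - U s0))
      (q y • GV y + (V y - U s0) • (B y + B.flip y)) y := by
    intro y hy
    exact (hqFD y).mul ((hVd y hy).hasFDerivAt.sub_const (U s0))
  have hFev : (fun y => fderiv ℝ (fun z => q z * (V z - U s0)) y) =ᶠ[nhds (ρ0 • s0)]
      (fun y => q y • GV y + (V y - U s0) • (B y + B.flip y)) := by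
    filter_upwards [isOpen_ne.mem_nhds hy0ne] with z hz
    exact (hWd z hz).fderiv
  have hBB : HasFDerivAt (fun y : Fin N → ℝ => B y + B.flip y) (B + B.flip) (ρ0 • s0) :=
    (B + B.flip).hasFDerivAt
  have ht1 : HasFDerivAt (fun y => q y • GV y)
      (q (ρ0 • s0) • G' + (B (ρ0 • s0) + B.flip (ρ0 • s0)).smulRight (GV (ρ0 • s0)))
      (ρ0 • s0) :=
    (hqFD _).smul (hGVd _ hy0ne).hasFDerivAt
  have ht2 : HasFDerivAt (fun y => (V y - U s0) • (B y + B.flip y))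
      ((V (ρ0 • s0) - U s0) • (B + B.flip)
        + (GV (ρ0 • s0)).smulRight (B (ρ0 • s0) + B.flip (ρ0 • s0))) (ρ0 • s0) :=
    ((hVd _ hy0ne).hasFDerivAt.sub_const (U s0)).smul hBB
  have htot : HasFDerivAt (fun y => q y • GV y + (V y - U s0) • (B y + B.flip y)) _ (ρ0 • s0) :=
    ht1.add ht2
  rw [hFev.fderiv_eq, htot.fderiv, hGs0eq]
  simp only [ContinuousLinearMap.add_apply, ContinuousLinearMap.smul_apply,
    ContinuousLinearMap.smulRight_apply, ContinuousLinearMap.comp_apply,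
    ContinuousLinearMap.zero_apply, hGVy0, hVy0, hqy0, sub_self, zero_smul, smul_zero,
    add_zero, zero_add, smul_eq_mul, hSapp, _root_.map_smul]
  rw [hRapp, ContinuousLinearMap.comp_apply, hSapp]
  simp only [_root_.map_smul, ContinuousLinearMap.smul_apply, smul_eq_mul]
  ring
end

section
/- Under the central configuration identity $\nabla U(s_0) = -\alpha U(s_0) M s_0$ with $|s_0|_M = 1$, the Hessian of $W(y) = |y|_M^{2+\alpha}U(y) - |y|_M^2 U(s_0)$ at $y_0 = \rho_0 s_0$ satisfies, for all $\xi,\eta$: $d^2 W(y_0)[\xi,\eta] = \langle D^2U(s_0)\xi, \eta\rangle - \alpha(\alpha+2)\langle Ms_0,\eta\rangle\langle Ms_0,\xi\rangle U(s_0) + \alpha \langle M\xi,\eta\rangle U(s_0)$. -/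
open Matrix

noncomputable def dp {N : ℕ} (w : Fin N → ℝ) : (Fin N → ℝ) →L[ℝ] ℝ :=
  LinearMap.toContinuousLinearMap
    { toFun := fun v => w ⬝ᵥ v
      map_add' := fun a b => dotProduct_add w a b
      map_smul' := fun c a => by simp [dotProduct_smul] }

@[simp] lemma dp_apply {N : ℕ} (w v : Fin N → ℝ) : dp w v = w ⬝ᵥ v := rfl

lemma hasFDerivAt_quad {N : ℕ} (M : Matrix (Fin N) (Fin N) ℝ)
    (hsym : ∀ u v : Fin N → ℝ, M.mulVec u ⬝ᵥ v = M.mulVec v ⬝ᵥ u) (y : Fin N → ℝ) :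
    HasFDerivAt (fun y => M.mulVec y ⬝ᵥ y) ((2:ℝ) • dp (M.mulVec y)) y := by
  have h : ∀ i : Fin N, HasFDerivAt (fun z : Fin N → ℝ => dp (M i) z * z i)
      ((M.mulVec y i) • (ContinuousLinearMap.proj i : (Fin N → ℝ) →L[ℝ] ℝ) + (y i) • dp (M i)) y := by
    intro i
    have := (dp (M i)).hasFDerivAt (x := y) |>.mul
      ((ContinuousLinearMap.proj i : (Fin N → ℝ) →L[ℝ] ℝ).hasFDerivAt (x := y))
    exact this
  have hsum := HasFDerivAt.fun_sum (u := Finset.univ) (fun i _ => h i)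
  have heq : (fun z : Fin N → ℝ => ∑ i, dp (M i) z * z i) = fun z => M.mulVec z ⬝ᵥ z := by
    funext z
    simp [dotProduct, Matrix.mulVec]
  rw [heq] at hsum
  refine hsum.congr_fderiv (Eq.symm ?_)
  ext v
  simp [Finset.sum_add_distrib, smul_eq_mul]
  have h1 : ∑ i, M.mulVec y i * v i = M.mulVec y ⬝ᵥ v := rfl
  have h2 : ∑ i, y i * (M i ⬝ᵥ v) = y ⬝ᵥ M.mulVec v := rfl
  rw [h1, h2, dotProduct_comm y, hsym v y, two_mul]

lemma contDiff_quad {N : ℕ} (M : Matrix (Fin N) (Fin N) ℝ) :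
    ContDiff ℝ (⊤ : ℕ∞) (fun y : Fin N → ℝ => M.mulVec y ⬝ᵥ y) := by
  have heq : (fun z : Fin N → ℝ => ∑ i, dp (M i) z * z i) = fun z => M.mulVec z ⬝ᵥ z := by
    funext z
    simp [dotProduct, Matrix.mulVec]
  rw [← heq]
  exact ContDiff.sum fun i _ => ((dp (M i)).contDiff).mul
    ((ContinuousLinearMap.proj i : (Fin N → ℝ) →L[ℝ] ℝ).contDiff)

lemma swap_eval {E : Type*} [NormedAddCommGroup E] [NormedSpace ℝ E]
    (h : E → (E →L[ℝ] ℝ)) (x : E) (hd : DifferentiableAt ℝ h x) (ξ η : E) :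
    fderiv ℝ (fun y => h y η) x ξ = fderiv ℝ h x ξ η := by
  have := ((ContinuousLinearMap.apply ℝ ℝ η).hasFDerivAt.comp x hd.hasFDerivAt).fderiv
  have heq : (ContinuousLinearMap.apply ℝ ℝ η) ∘ h = fun y => h y η := rfl
  rw [heq] at this
  rw [this]
  rfl

lemma scale_fderiv {E : Type*} [NormedAddCommGroup E] [NormedSpace ℝ E]
    (f : E → ℝ) (V : Set E) (hV : IsOpen V) (c k : ℝ)
    (hf : ∀ z ∈ V, f (c • z) = k * f z)
    (y : E) (hy : y ∈ V)
    (hdc : DifferentiableAt ℝ f (c • y)) (hdy : DifferentiableAt ℝ f y) (v : E) :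
    c * fderiv ℝ f (c • y) v = k * fderiv ℝ f y v := by
  have hsmul : HasFDerivAt (fun z : E => c • z) (c • ContinuousLinearMap.id ℝ E) y := by
    exact (hasFDerivAt_id y).const_smul c
  have h1 : HasFDerivAt (fun z => f (c • z)) ((fderiv ℝ f (c • y)).comp (c • ContinuousLinearMap.id ℝ E)) y :=
    hdc.hasFDerivAt.comp y hsmul
  have h2 : HasFDerivAt (fun z => k * f z) (k • fderiv ℝ f y) y := hdy.hasFDerivAt.const_mul k
  have hev : (fun z => f (c • z)) =ᶠ[nhds y] (fun z => k * f z) := by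
    filter_upwards [hV.mem_nhds hy] with z hz using hf z hz
  have h3 : HasFDerivAt (fun z => f (c • z)) (k • fderiv ℝ f y) y :=
    h2.congr_of_eventuallyEq hev
  have := congrArg (fun (L : E →L[ℝ] ℝ) => L v) (h1.unique h3)
  simpa [smul_eq_mul, mul_comm] using this

theorem stmt10 (N : ℕ) (α : ℝ) (hα : 0 < α)
    (M : Matrix (Fin N) (Fin N) ℝ) (hM : M.PosDef)
    (U : (Fin N → ℝ) → ℝ)
    (hU : ContDiffOn ℝ (⊤ : ℕ∞) U {y | y ≠ 0})
    (hhom : ∀ c : ℝ, 0 < c → ∀ y : Fin N → ℝ, y ≠ 0 → U (c • y) = c ^ (-α) * U y)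
    (s0 : Fin N → ℝ) (hs0 : M.mulVec s0 ⬝ᵥ s0 = 1)
    (hcc : ∀ v, fderiv ℝ U s0 v = -(α * U s0) * (M.mulVec s0 ⬝ᵥ v))
    (ρ0 : ℝ) (hρ0 : 0 < ρ0)
    (W : (Fin N → ℝ) → ℝ)
    (hW : ∀ y, W y = Real.sqrt (M.mulVec y ⬝ᵥ y) ^ (2 + α) * U y
        - (M.mulVec y ⬝ᵥ y) * U s0) :
    ∀ ξ η : Fin N → ℝ,
      fderiv ℝ (fun y => fderiv ℝ W y) (ρ0 • s0) ξ η
        = fderiv ℝ (fun y => fderiv ℝ U y) s0 ξ η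
          - α * (α + 2) * (M.mulVec s0 ⬝ᵥ η) * (M.mulVec s0 ⬝ᵥ ξ) * U s0
          + α * (M.mulVec ξ ⬝ᵥ η) * U s0 := by
  intro ξ η
  set V : Set (Fin N → ℝ) := {y | y ≠ 0} with hVdef
  have hV : IsOpen V := isOpen_ne
  have hsym : ∀ u v : (Fin N → ℝ), M.mulVec u ⬝ᵥ v = M.mulVec v ⬝ᵥ u := by
    intro u v
    have hMT : Mᵀ = M := by simpa [Matrix.IsSymm] using hM.1
    rw [dotProduct_comm, dotProduct_mulVec]
    rw [show v ᵥ* M = M *ᵥ v from by conv_rhs => rw [← hMT, Matrix.mulVec_transpose]]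
  set P : (Fin N → ℝ) → ℝ := fun y => M.mulVec y ⬝ᵥ y with hPdef
  have hPpos : ∀ y : (Fin N → ℝ), y ≠ 0 → 0 < P y := by
    intro y hy
    have := hM.dotProduct_mulVec_pos hy
    simpa [hPdef, dotProduct_comm] using this
  have hPnn : ∀ y : (Fin N → ℝ), 0 ≤ P y := by
    intro y
    by_cases hy : y = 0
    · simp [hPdef, hy]
    · exact (hPpos y hy).le
  have hs0ne : s0 ≠ 0 := by
    intro h
    rw [h] at hs0
    simp at hs0
  set y0 : (Fin N → ℝ) := ρ0 • s0 with hy0def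
  have hy0ne : y0 ≠ 0 := smul_ne_zero hρ0.ne' hs0ne
  have hy0V : y0 ∈ V := hy0ne
  have hs0V : s0 ∈ V := hs0ne
  have hUdiff : ∀ y : (Fin N → ℝ), y ≠ 0 → DifferentiableAt ℝ U y := fun y hy =>
    (hU.differentiableOn (by simp)).differentiableAt (hV.mem_nhds hy)
  have hU1 : ContDiffOn ℝ (⊤ : ℕ∞) (fderiv ℝ U) V := hU.fderiv_of_isOpen hV (by simp)
  have hU1diff : ∀ y : (Fin N → ℝ), y ≠ 0 → DifferentiableAt ℝ (fderiv ℝ U) y := fun y hy =>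
    (hU1.differentiableOn (by simp)).differentiableAt (hV.mem_nhds hy)
  set p : ℝ := (2 + α) / 2 with hpdef
  have hWF : W = fun y => P y ^ p * U y - P y * U s0 := by
    funext y
    rw [hW y]
    congr 1
    congr 1
    rw [Real.sqrt_eq_rpow, ← Real.rpow_mul (hPnn y)]
    congr 1
    ring
  have hWsmooth : ContDiffOn ℝ (⊤ : ℕ∞) W V := by
    rw [hWF]
    apply ContDiffOn.sub
    · apply ContDiffOn.mul
      · intro y hy
        exact (((contDiff_quad M).contDiffAt.rpow_const_of_ne (hPpos y hy).ne').contDiffWithinAt)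
      · exact hU
    · exact ((contDiff_quad M).contDiffOn).mul contDiffOn_const
  have hWdiff2 : DifferentiableAt ℝ (fderiv ℝ W) y0 :=
    ((hWsmooth.fderiv_of_isOpen (m := (⊤ : ℕ∞)) hV (by simp)).differentiableOn (by simp)).differentiableAt
      (hV.mem_nhds hy0V)
  set G : (Fin N → ℝ) → ℝ := fun y => fderiv ℝ U y η with hGdef
  have hGdiff : ∀ y : (Fin N → ℝ), y ≠ 0 → DifferentiableAt ℝ G y := fun y hy =>
    (ContinuousLinearMap.apply ℝ ℝ η).differentiableAt.comp y (hU1diff y hy)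
  set h : (Fin N → ℝ) → ℝ := fun y =>
      P y ^ p * G y + U y * (p * P y ^ (p - 1) * (2 * (M.mulVec y ⬝ᵥ η)))
        - U s0 * (2 * (M.mulVec y ⬝ᵥ η)) with hhdef
  have hh : ∀ y : (Fin N → ℝ), y ≠ 0 → fderiv ℝ W y η = h y := by
    intro y hy
    have hq := hasFDerivAt_quad M hsym y
    have hFy : HasFDerivAt (fun y => P y ^ p * U y - P y * U s0) _ y :=
      ((hq.rpow_const (Or.inl (hPpos y hy).ne')).mul (hUdiff y hy).hasFDerivAt).sub
        (hq.mul_const (U s0))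
    rw [hWF, hFy.fderiv]
    simp [smul_eq_mul]
    rfl
  have hswapW : fderiv ℝ (fun y => fderiv ℝ W y) y0 ξ η
      = fderiv ℝ (fun y => fderiv ℝ W y η) y0 ξ :=
    (swap_eval (fderiv ℝ W) y0 hWdiff2 ξ η).symm
  have hswapU : fderiv ℝ (fun y => fderiv ℝ U y) s0 ξ η = fderiv ℝ G s0 ξ :=
    (swap_eval (fderiv ℝ U) s0 (hU1diff s0 hs0ne) ξ η).symm
  have hfeq : fderiv ℝ (fun y => fderiv ℝ W y η) y0 ξ = fderiv ℝ h y0 ξ := by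
    have hev : (fun y => fderiv ℝ W y η) =ᶠ[nhds y0] h := by
      filter_upwards [hV.mem_nhds hy0V] with z hz using hh z hz
    rw [hev.fderiv_eq]
  -- Level 4: derivative of h at y0
  have hLη : HasFDerivAt (fun y : Fin N → ℝ => M.mulVec y ⬝ᵥ η) (dp (M.mulVec η)) y0 := by
    have heq : (fun y : Fin N → ℝ => M.mulVec y ⬝ᵥ η) = ⇑(dp (M.mulVec η)) := by
      funext z
      simp [hsym z η]
    rw [heq]
    exact (dp (M.mulVec η)).hasFDerivAt
  have hP0 := hasFDerivAt_quad M hsym y0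
  have hr1 := hP0.rpow_const (p := p - 1) (Or.inl (hPpos y0 hy0ne).ne')
  have hr2 := hP0.rpow_const (p := p) (Or.inl (hPpos y0 hy0ne).ne')
  have hUd0 := (hUdiff y0 hy0ne).hasFDerivAt
  have hGd0 := (hGdiff y0 hy0ne).hasFDerivAt
  have T2 := hr2.mul hGd0
  have A1 := hr1.const_mul p
  have A2 := hLη.const_mul (2:ℝ)
  have A3 := A1.mul A2
  have A4 := hUd0.mul A3
  have T3 := A2.const_mul (U s0)
  have htot : HasFDerivAt h _ y0 := (T2.add A4).sub T3
  have hhval : fderiv ℝ h y0 ξ =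
      P y0 ^ p * (fderiv ℝ G y0 ξ)
        + G y0 * (p * P y0 ^ (p - 1) * (2 * (M.mulVec y0 ⬝ᵥ ξ)))
        + (U y0 * ((p * P y0 ^ (p - 1)) * (2 * (M.mulVec η ⬝ᵥ ξ))
              + (2 * (M.mulVec y0 ⬝ᵥ η)) * (p * ((p - 1) * P y0 ^ (p - 1 - 1) * (2 * (M.mulVec y0 ⬝ᵥ ξ))))
            )
          + (p * P y0 ^ (p - 1) * (2 * (M.mulVec y0 ⬝ᵥ η))) * (fderiv ℝ U y0 ξ))
        - U s0 * (2 * (M.mulVec η ⬝ᵥ ξ)) := by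
    rw [htot.fderiv]
    simp [smul_eq_mul]
    ring
  -- values at y0
  have hsq : ρ0 ^ (2:ℝ) = ρ0 * ρ0 := by
    rw [show (2:ℝ) = ((2:ℕ):ℝ) by norm_num, Real.rpow_natCast]
    ring
  have hPy0 : P y0 = ρ0 ^ (2:ℝ) := by
    rw [hsq]
    show M.mulVec (ρ0 • s0) ⬝ᵥ (ρ0 • s0) = ρ0 * ρ0
    rw [Matrix.mulVec_smul, smul_dotProduct, dotProduct_smul, hs0]
    simp
  have hMy0ξ : M.mulVec y0 ⬝ᵥ ξ = ρ0 * (M.mulVec s0 ⬝ᵥ ξ) := by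
    show M.mulVec (ρ0 • s0) ⬝ᵥ ξ = _
    rw [Matrix.mulVec_smul, smul_dotProduct]
    simp
  have hMy0η : M.mulVec y0 ⬝ᵥ η = ρ0 * (M.mulVec s0 ⬝ᵥ η) := by
    show M.mulVec (ρ0 • s0) ⬝ᵥ η = _
    rw [Matrix.mulVec_smul, smul_dotProduct]
    simp
  have hUy0 : U y0 = ρ0 ^ (-α) * U s0 := hhom ρ0 hρ0 s0 hs0ne
  have hUscale := fun (v : Fin N → ℝ) => scale_fderiv U V hV ρ0 (ρ0 ^ (-α))
    (fun z hz => hhom ρ0 hρ0 z hz) s0 hs0V (hUdiff y0 hy0ne) (hUdiff s0 hs0ne) v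
  have hGhom : ∀ z ∈ V, G (ρ0 • z) = (ρ0 ^ (-α) / ρ0) * G z := by
    intro z hz
    have hz' : ρ0 • z ≠ 0 := smul_ne_zero hρ0.ne' hz
    have h2 := scale_fderiv U V hV ρ0 (ρ0 ^ (-α)) (fun w hw => hhom ρ0 hρ0 w hw) z hz
      (hUdiff _ hz') (hUdiff z hz) η
    rw [div_mul_eq_mul_div, eq_div_iff hρ0.ne']
    linear_combination h2
  have hGscale := scale_fderiv G V hV ρ0 (ρ0 ^ (-α) / ρ0) hGhom s0 hs0V
    (hGdiff y0 hy0ne) (hGdiff s0 hs0ne) ξ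
  -- rpow bookkeeping
  set u : ℝ := ρ0 ^ (α:ℝ) with hudef
  have hu : 0 < u := Real.rpow_pos_of_pos hρ0 α
  have F1 : (ρ0 ^ (2:ℝ)) ^ (p - 1) = u := by
    rw [← Real.rpow_mul hρ0.le, hudef]
    congr 1
    rw [hpdef]; ring
  have F2 : (ρ0 ^ (2:ℝ)) ^ (p - 1 - 1) = u / (ρ0 * ρ0) := by
    rw [← Real.rpow_mul hρ0.le, show (2:ℝ) * (p - 1 - 1) = α - 2 by rw [hpdef]; ring,
      Real.rpow_sub hρ0, hudef, hsq]
  have F3 : (ρ0 ^ (2:ℝ)) ^ p = u * (ρ0 * ρ0) := by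
    rw [← Real.rpow_mul hρ0.le, show (2:ℝ) * p = α + 2 by rw [hpdef]; ring,
      Real.rpow_add hρ0, hudef, hsq]
  have F4 : ρ0 ^ (-α) = u⁻¹ := by
    rw [Real.rpow_neg hρ0.le, hudef]
  -- explicit first/second derivative values
  have e1 : fderiv ℝ U y0 ξ = (u⁻¹ * (-(α * U s0) * (M.mulVec s0 ⬝ᵥ ξ))) / ρ0 := by
    rw [eq_div_iff hρ0.ne', ← F4]
    have := hUscale ξ
    rw [hcc ξ] at this
    linear_combination this
  have e2 : G y0 = (u⁻¹ * (-(α * U s0) * (M.mulVec s0 ⬝ᵥ η))) / ρ0 := by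
    rw [eq_div_iff hρ0.ne', ← F4]
    have := hUscale η
    rw [hcc η] at this
    linear_combination this
  have e3 : fderiv ℝ G y0 ξ = (u⁻¹ * fderiv ℝ G s0 ξ) / (ρ0 * ρ0) := by
    rw [eq_div_iff (mul_ne_zero hρ0.ne' hρ0.ne'), ← F4]
    field_simp at hGscale
    linear_combination hGscale
  -- finish
  rw [hswapW, hfeq, hhval, hswapU, hPy0, hMy0ξ, hMy0η, hUy0, F1, F2, F3, F4, e1, e2, e3,
    show M.mulVec η ⬝ᵥ ξ = M.mulVec ξ ⬝ᵥ η from hsym η ξ, hpdef]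
  field_simp
  ring
end

section
/- Let $\alpha \in (0,2)$, $U_0 > 0$, $c_\alpha = (4/(2-\alpha))^2 - 1$, $\bar\delta_\alpha = \pm\frac{2-\alpha}{4}\sqrt{2U_0}$. Given a symmetric matrix $S$ (representing $D^2\widetilde{U}(s_0)$ restricted to $s_0^{\perp_M}$), the Hamiltonian matrix $J T^*$ with $T^* = \begin{bmatrix} I & -c_\alpha\bar\delta_\alpha I \\ -c_\alpha\bar\delta_\alpha I & (c_\alpha\bar\delta_\alpha)^2 I - \frac{(2-\alpha)^2}{8}U_0 I - S \end{bmatrix}$ is hyperbolic if and only if $\frac{(2-\alpha)^2}{8}U_0 I + S$ is positive definite. -/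
/-!
Multiplying out the blocks gives `(J T*)² = diag(C, C)` with `C = (2-α)²/8 · U₀ · I + S`. By
spectral mapping, `σ((J T*)²) = {z² | z ∈ σ(J T*)}`, and `z² ≤ 0` in `ℂ` exactly when `z` is purely
imaginary, so `J T*` is hyperbolic iff the spectrum of `C` contains no nonpositive real number. For
the symmetric matrix `C` this says that all its eigenvalues are positive.
-/

open Matrix
open scoped ComplexOrder

theorem Complex.forall_spectrum_re_ne_zero_iff {A : Type*} [Ring A] [Algebra ℂ A] (a : A) :
    (∀ z ∈ spectrum ℂ a, z.re ≠ 0) ↔ ∀ w ∈ spectrum ℂ (a ^ 2), ¬ w ≤ 0 := by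
  simp [spectrum.map_pow_of_pos a two_pos, Complex.sq_nonpos_iff]

namespace Matrix

variable {n : Type*} [Fintype n] [DecidableEq n]

section Spectrum

variable {K L : Type*} [Field K] [Field L]

theorem spectrum_fromBlocks_zero₁₂_zero₂₁ {m : Type*} [Fintype m] [DecidableEq m]
    (A : Matrix m m K) (D : Matrix n n K) :
    spectrum K (fromBlocks A 0 0 D) = spectrum K A ∪ spectrum K D := by
  ext z
  have h : algebraMap K _ z - fromBlocks A 0 0 D
      = fromBlocks (algebraMap K _ z - A) 0 0 (algebraMap K _ z - D) := by
    ext (i | i) (j | j) <;> simp [algebraMap_eq_diagonal, diagonal_apply]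
  simp only [Set.mem_union, spectrum.mem_iff, isUnit_iff_isUnit_det, h, det_fromBlocks_zero₂₁,
    IsUnit.mul_iff, not_and_or]

theorem map_mem_spectrum_map_iff (f : K →+* L) (A : Matrix n n K) (t : K) :
    f t ∈ spectrum L (A.map f) ↔ t ∈ spectrum K A := by
  have h : algebraMap L _ (f t) - A.map f = f.mapMatrix (algebraMap K _ t - A) := by
    simp [algebraMap_eq_diagonal, Matrix.map_sub, diagonal_map]
  simp only [spectrum.mem_iff, isUnit_iff_isUnit_det, h, ← RingHom.map_det, isUnit_iff_ne_zero,
    map_ne_zero]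

theorem forall_spectrum_map_ofReal_not_nonpos_iff (A : Matrix n n ℝ) :
    (∀ w ∈ spectrum ℂ (A.map Complex.ofReal), ¬ w ≤ 0) ↔ ∀ t ∈ spectrum ℝ A, 0 < t := by
  have hmem (t : ℝ) : (t : ℂ) ∈ spectrum ℂ (A.map Complex.ofReal) ↔ t ∈ spectrum ℝ A :=
    map_mem_spectrum_map_iff Complex.ofRealHom A t
  constructor
  · intro h t ht
    exact not_le.1 fun ht0 => h t ((hmem t).2 ht) (by exact_mod_cast ht0)
  · intro h w hw hw0
    obtain ⟨hre, him⟩ := Complex.nonpos_iff.1 hw0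
    rw [← Complex.re_add_im w, him, Complex.ofReal_zero, zero_mul, add_zero, hmem] at hw
    exact (h _ hw).not_ge hre

theorem IsHermitian.posDef_iff_spectrum_real_pos {𝕜 : Type*} [RCLike 𝕜] {A : Matrix n n 𝕜}
    (hA : A.IsHermitian) : A.PosDef ↔ ∀ t ∈ spectrum ℝ A, 0 < t := by
  rw [hA.posDef_iff_eigenvalues_pos, hA.spectrum_real_eq_range_eigenvalues, Set.forall_mem_range]

end Spectrum

theorem fromBlocks_symplectic_mul_fromBlocks_sq {R : Type*} [CommRing R] (b : R) (C : Matrix n n R) :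
    (fromBlocks 0 (-1) 1 0 * fromBlocks 1 (-(b • 1)) (-(b • 1)) (b ^ 2 • 1 - C)) ^ 2
      = fromBlocks C 0 0 C := by
  rw [fromBlocks_multiply, sq, fromBlocks_multiply, fromBlocks_inj]
  refine ⟨?_, ?_, ?_, ?_⟩ <;>
    simp only [Matrix.zero_mul, Matrix.neg_mul, Matrix.one_mul, Matrix.mul_neg, Matrix.mul_one,
      Matrix.mul_zero, Matrix.mul_sub, Matrix.mul_add, Matrix.add_mul, Matrix.mul_smul,
      Matrix.smul_mul, smul_zero] <;>
    module

end Matrix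

theorem stmt18_general (N : ℕ) (α U0 : ℝ) (c δ : ℝ)
    (S : Matrix (Fin N) (Fin N) ℝ) (hS : S.IsSymm)
    (J : Matrix (Fin N ⊕ Fin N) (Fin N ⊕ Fin N) ℝ) (hJ : J = fromBlocks 0 (-1) 1 0)
    (Tstar : Matrix (Fin N ⊕ Fin N) (Fin N ⊕ Fin N) ℝ)
    (hT : Tstar = fromBlocks 1 (-((c * δ) • (1 : Matrix (Fin N) (Fin N) ℝ)))
        (-((c * δ) • (1 : Matrix (Fin N) (Fin N) ℝ)))
        ((c * δ) ^ 2 • (1 : Matrix (Fin N) (Fin N) ℝ)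
          - ((2 - α) ^ 2 / 8 * U0) • (1 : Matrix (Fin N) (Fin N) ℝ) - S)) :
    (∀ z ∈ spectrum ℂ ((J * Tstar).map Complex.ofReal), z.re ≠ 0)
    ↔ (((2 - α) ^ 2 / 8 * U0) • (1 : Matrix (Fin N) (Fin N) ℝ) + S).PosDef := by
  set C := ((2 - α) ^ 2 / 8 * U0) • (1 : Matrix (Fin N) (Fin N) ℝ) + S
  have hC : C.IsHermitian := isHermitian_iff_isSymm.2 ((isSymm_one.smul _).add hS)
  have hsq : (J * Tstar).map Complex.ofReal ^ 2
      = fromBlocks (C.map Complex.ofReal) 0 0 (C.map Complex.ofReal) := by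
    calc _ = ((J * Tstar) ^ 2).map Complex.ofReal := (Matrix.map_pow _ Complex.ofRealHom 2).symm
      _ = _ := by
        rw [hJ, hT, sub_sub, fromBlocks_symplectic_mul_fromBlocks_sq, fromBlocks_map]
        simp [C]
  rw [Complex.forall_spectrum_re_ne_zero_iff, hsq, spectrum_fromBlocks_zero₁₂_zero₂₁,
    Set.union_self, forall_spectrum_map_ofReal_not_nonpos_iff, hC.posDef_iff_spectrum_real_pos]

theorem stmt18 (N : ℕ) (α U0 : ℝ) (hα : 0 < α ∧ α < 2) (hU0 : 0 < U0)
    (c δ : ℝ) (hc : c = (4 / (2 - α)) ^ 2 - 1)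
    (hδ : δ = (2 - α) / 4 * Real.sqrt (2 * U0) ∨ δ = -((2 - α) / 4 * Real.sqrt (2 * U0)))
    (S : Matrix (Fin N) (Fin N) ℝ) (hS : S.IsSymm)
    (J : Matrix (Fin N ⊕ Fin N) (Fin N ⊕ Fin N) ℝ) (hJ : J = fromBlocks 0 (-1) 1 0)
    (Tstar : Matrix (Fin N ⊕ Fin N) (Fin N ⊕ Fin N) ℝ)
    (hT : Tstar = fromBlocks 1 (-((c * δ) • (1 : Matrix (Fin N) (Fin N) ℝ)))
        (-((c * δ) • (1 : Matrix (Fin N) (Fin N) ℝ)))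
        ((c * δ) ^ 2 • (1 : Matrix (Fin N) (Fin N) ℝ)
          - ((2 - α) ^ 2 / 8 * U0) • (1 : Matrix (Fin N) (Fin N) ℝ) - S)) :
    (∀ z ∈ spectrum ℂ ((J * Tstar).map Complex.ofReal), z.re ≠ 0)
    ↔ (((2 - α) ^ 2 / 8 * U0) • (1 : Matrix (Fin N) (Fin N) ℝ) + S).PosDef :=
  stmt18_general N α U0 c δ S hS J hJ Tstar hT
end
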